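/- arXiv:1204.5704 — 4 statements merged into one kernel-verified Lean document; each statement's English description precedes it below -/
import Mathlib

section
/- For every integer n ≥ 2, the n-th Catalan number satisfies C_n = ∑_{1 ≤ k ≤ n/2} 2^{n-2k} · C(n, 2k) · C_k · (k(n+2))/(n(n-1)), where the sum is over integers k with 1 ≤ k ≤ n/2. Equivalently, after clearing denominators, n(n-1)·C_n = ∑_{1 ≤ k ≤ n/2} 2^{n-2k} · C(n, 2k) · C_k · k(n+2). -/
/-!
Since `(n + 1) C_n = C(2n, n)` and `k C_k = C(2k, k + 1)`, clearing denominators turns the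
identity into `C(2n, n + 2) = ∑_k 2^(n-2k) C(n, 2k) C(2k, k + 1)`. Both sides are the coefficient
of `X^(n+2)` in `(1 + X)^(2n) = ((1 + X²) + 2X)^n`; the binomial expansion of the right-hand side
contributes `C(n, r) 2^(n-r) [X^(r+2)] (1 + X²)^r`, which vanishes unless `r = 2k` is even.
-/

open Polynomial Finset

theorem mul_catalan_eq_choose (k : ℕ) : k * catalan k = (2 * k).choose (k + 1) := by
  refine Nat.eq_of_mul_eq_mul_right k.succ_pos ?_
  calc k * catalan k * (k + 1) = (k + 1) * catalan k * k := by ring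
    _ = (2 * k).choose k * (2 * k - k) := by
      rw [succ_mul_catalan_eq_centralBinom, Nat.centralBinom_eq_two_mul_choose,
        two_mul, Nat.add_sub_cancel]
    _ = (2 * k).choose (k + 1) * (k + 1) := (Nat.choose_succ_right_eq _ _).symm

theorem choose_two_mul_add_two_mul_eq_catalan_mul (n : ℕ) :
    (2 * n).choose (n + 2) * (n + 2) = catalan n * n * (n - 1) := by
  have h₁ := Nat.choose_succ_right_eq (2 * n) (n + 1)
  have h₀ := Nat.choose_succ_right_eq (2 * n) n
  rw [show 2 * n - (n + 1) = n - 1 by omega] at h₁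
  rw [show 2 * n - n = n by omega] at h₀
  refine Nat.eq_of_mul_eq_mul_right n.succ_pos ?_
  calc (2 * n).choose (n + 2) * (n + 2) * (n + 1)
      = (2 * n).choose (n + 1) * (n + 1) * (n - 1) := by rw [h₁]; ring
    _ = (n + 1) * catalan n * n * (n - 1) := by
      rw [h₀, succ_mul_catalan_eq_centralBinom, Nat.centralBinom_eq_two_mul_choose]
    _ = catalan n * n * (n - 1) * (n + 1) := by ring

theorem coeff_one_add_X_sq_pow (R : Type*) [CommSemiring R] (r i : ℕ) :
    ((1 + X ^ 2 : R[X]) ^ r).coeff i = if 2 ∣ i then (r.choose (i / 2) : R) else 0 := by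
  have : (1 + X ^ 2 : R[X]) ^ r = expand R 2 ((1 + X) ^ r) := by simp
  rw [this, coeff_expand two_pos, coeff_one_add_X_pow]

theorem choose_two_mul_add_eq_sum (n m : ℕ) :
    (2 * n).choose (n + m) = ∑ r ∈ range (n + 1),
      n.choose r * 2 ^ (n - r) * if 2 ∣ r + m then r.choose ((r + m) / 2) else 0 := by
  have hsq : (1 + X : ℕ[X]) ^ (2 * n) = ((1 + X ^ 2) + C 2 * X) ^ n := by
    rw [pow_mul, show (C 2 : ℕ[X]) = 2 from rfl]; ring
  have := congrArg (coeff · (n + m)) hsq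
  simp only [coeff_one_add_X_pow, Nat.cast_id] at this
  rw [this, add_pow, finsetSum_coeff]
  refine sum_congr rfl fun r hr_mem ↦ ?_
  have hr : r ≤ n := Nat.lt_succ_iff.mp (mem_range.mp hr_mem)
  have hterm : (1 + X ^ 2) ^ r * (C 2 * X) ^ (n - r) * (n.choose r : ℕ[X]) =
      (n.choose r : ℕ[X]) * (C (2 ^ (n - r)) * ((1 + X ^ 2) ^ r * X ^ (n - r))) := by
    rw [C_pow]; ring
  rw [hterm, coeff_natCast_mul, coeff_C_mul, coeff_mul_X_pow', if_pos (by omega),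
    show n + m - (n - r) = r + m by omega, coeff_one_add_X_sq_pow]
  simp only [Nat.cast_id, mul_assoc]

theorem choose_two_mul_add_two_eq_sum (n : ℕ) :
    (2 * n).choose (n + 2) =
      ∑ k ∈ Icc 1 (n / 2), 2 ^ (n - 2 * k) * n.choose (2 * k) * (k * catalan k) := by
  set f : ℕ → ℕ := fun r ↦
    n.choose r * 2 ^ (n - r) * if 2 ∣ r + 2 then r.choose ((r + 2) / 2) else 0
  have hf_eq_zero (r : ℕ) (hr : r ∉ (Icc 1 (n / 2)).image (2 * ·)) (hrn : r ≤ n) : f r = 0 := by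
    simp only [f, mem_image, mem_Icc, not_exists, not_and] at hr ⊢
    split_ifs with h
    · obtain rfl : r = 0 := by have := hr (r / 2); omega
      simp
    · exact mul_zero _
  calc (2 * n).choose (n + 2) = ∑ r ∈ range (n + 1), f r := choose_two_mul_add_eq_sum n 2
    _ = ∑ r ∈ (Icc 1 (n / 2)).image (2 * ·), f r := by
      refine (sum_subset (fun r ↦ ?_) fun r hr hr' ↦ hf_eq_zero r hr' ?_).symm
      · simp only [mem_image, mem_Icc, mem_range]
        omega
      · exact Nat.lt_succ_iff.mp (mem_range.mp hr)
    _ = ∑ k ∈ Icc 1 (n / 2), f (2 * k) := sum_image fun _ _ _ _ h ↦ by omega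
    _ = _ := by
      refine sum_congr rfl fun k _ ↦ ?_
      simp only [f]
      rw [if_pos (dvd_add (dvd_mul_right 2 k) dvd_rfl), mul_catalan_eq_choose,
        show (2 * k + 2) / 2 = k + 1 by omega]
      ring

/-- For every integer `n ≥ 2`,
`C n = ∑_{1 ≤ k ≤ n/2} 2^(n-2k) * (n choose 2k) * C k * (k*(n+2))/(n*(n-1))`,
as an identity of rational numbers, where `C` is the Catalan number. -/
theorem catalan_identity_variant (n : ℕ) (hn : 2 ≤ n) :
    (catalan n : ℚ) =
      ∑ k ∈ Finset.Icc 1 (n / 2),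
        2 ^ (n - 2 * k) * (n.choose (2 * k) : ℚ) * (catalan k : ℚ) *
          (k * (n + 2)) / (n * (n - 1)) := by
  have hne : (n * (n - 1) : ℚ) ≠ 0 := by
    have : (2 : ℚ) ≤ n := by exact_mod_cast hn
    exact mul_ne_zero (by positivity) (by linarith)
  have key := congrArg (Nat.cast : ℕ → ℚ) (choose_two_mul_add_two_mul_eq_catalan_mul n)
  rw [choose_two_mul_add_two_eq_sum] at key
  push_cast [Nat.cast_sub (by omega : 1 ≤ n), sum_mul] at key
  rw [← sum_div, eq_div_iff hne, ← mul_assoc, ← key]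
  exact sum_congr rfl fun k _ ↦ by ring
end

section
/- (Touchard's identity) For every integer n ≥ 0, C_{n+1} = ∑_{0 ≤ k ≤ n/2} 2^{n-2k} · C(n, 2k) · C_k, where the sum is over integers k with 0 ≤ k ≤ n/2. -/
open Finset

private def tF (n k : ℕ) : ℕ := 2 ^ (n - 2 * k) * n.choose (2 * k) * catalan k

private def tG (n k : ℕ) : ℕ :=
  k * (k + 1) * 2 ^ (n + 2 - 2 * k) * (n + 1).choose (2 * k) * catalan k

private lemma cat_rec (k : ℕ) : (k + 2) * catalan (k + 1) = 2 * (2 * k + 1) * catalan k := by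
  have h1 := succ_mul_catalan_eq_centralBinom (k + 1)
  rw [show k + 1 + 1 = k + 2 by omega] at h1
  have h4 : (k + 1) * ((k + 2) * catalan (k + 1)) = (k + 1) * (2 * (2 * k + 1) * catalan k) := by
    rw [h1, Nat.succ_mul_centralBinom_succ, ← succ_mul_catalan_eq_centralBinom k]; ring
  exact Nat.eq_of_mul_eq_mul_left (by omega) h4

private lemma catalan_rec (n : ℕ) :
    (n + 3) * catalan (n + 2) = 2 * (2 * n + 3) * catalan (n + 1) := by
  have h := cat_rec (n + 1)
  rw [show n + 1 + 2 = n + 3 by omega, show n + 1 + 1 = n + 2 by omega,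
    show 2 * (n + 1) + 1 = 2 * n + 3 by ring] at h
  exact h

/-- termwise Zeilberger-style identity -/
private lemma termwise (n k : ℕ) :
    4 * (n + 1) * (n + 3) * tF (n + 1) k + 8 * tG n (k + 1)
      = 8 * (n + 1) * (2 * n + 3) * tF n k + 8 * tG n k := by
  rcases le_or_gt (2 * k) n with h | h
  · -- main case: 2k ≤ n
    obtain ⟨m, rfl⟩ : ∃ m, n = 2 * k + m := ⟨n - 2 * k, by omega⟩
    unfold tF tG
    have e1 : (2 * k + m + 1) - 2 * k = m + 1 := by omega
    have e2 : (2 * k + m) - 2 * k = m := by omega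
    have e3 : (2 * k + m + 2) - 2 * (k + 1) = m := by omega
    have e4 : (2 * k + m + 2) - 2 * k = m + 2 := by omega
    rw [e1, e2, e3, e4]
    have h1 : (k + 2) * catalan (k + 1) = 2 * (2 * k + 1) * catalan k := cat_rec k
    have h2a : (2 * k + m + 1).choose (2 * k + 1) * (2 * k + 1)
        = (2 * k + m + 1).choose (2 * k) * (m + 1) := by
      have := Nat.choose_succ_right_eq (2 * k + m + 1) (2 * k)
      rwa [show 2 * k + m + 1 - 2 * k = m + 1 by omega] at this
    have h2b : (2 * k + m + 1).choose (2 * k + 2) * (2 * k + 2)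
        = (2 * k + m + 1).choose (2 * k + 1) * m := by
      have := Nat.choose_succ_right_eq (2 * k + m + 1) (2 * k + 1)
      rwa [show 2 * k + m + 1 - (2 * k + 1) = m by omega] at this
    have h3 : (2 * k + m).choose (2 * k) * (2 * k + m + 1)
        = (2 * k + m + 1).choose (2 * k) * (m + 1) := by
      have := Nat.choose_mul_succ_eq (2 * k + m) (2 * k)
      rwa [show 2 * k + m + 1 - 2 * k = m + 1 by omega] at this
    have hc : 2 * (k + 1) = 2 * k + 2 := by ring
    zify at h1 h2a h2b h3 ⊢
    rw [hc]
    linear_combination (8 * (k + 1) * 2 ^ m * ((2 * k + m + 1).choose (2 * k + 2) : ℤ)) * h1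
      + (8 * 2 ^ m * (catalan k : ℤ) * m) * h2a
      + (8 * 2 ^ m * (catalan k : ℤ) * (2 * k + 1)) * h2b
      - (8 * (4 * k + 2 * m + 3) * 2 ^ m * (catalan k : ℤ)) * h3
  · rcases eq_or_lt_of_le (show n + 1 ≤ 2 * k by omega) with h1 | h1
    · -- boundary case: 2k = n + 1
      obtain ⟨j, rfl⟩ : ∃ j, k = j + 1 := ⟨k - 1, by omega⟩
      obtain rfl : n = 2 * j + 1 := by omega
      unfold tF tG
      rw [show (2 * j + 1).choose (2 * (j + 1)) = 0 from
          Nat.choose_eq_zero_of_lt (by omega),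
        show (2 * j + 1 + 1).choose (2 * (j + 1 + 1)) = 0 from
          Nat.choose_eq_zero_of_lt (by omega),
        show 2 * j + 1 + 1 - 2 * (j + 1) = 0 by omega,
        show 2 * j + 1 + 2 - 2 * (j + 1) = 1 by omega,
        show (2 * j + 1 + 1).choose (2 * (j + 1)) = 1 by
          rw [show 2 * (j + 1) = 2 * j + 1 + 1 by ring]; exact Nat.choose_self _]
      ring
    · -- vanishing case: 2k ≥ n + 2
      unfold tF tG
      rw [Nat.choose_eq_zero_of_lt (show n < 2 * k by omega),
        Nat.choose_eq_zero_of_lt (show n + 1 < 2 * k by omega),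
        Nat.choose_eq_zero_of_lt (show n + 1 < 2 * (k + 1) by omega)]
      ring

private lemma sum_rec (n : ℕ) :
    (n + 3) * ∑ k ∈ range ((n + 1) / 2 + 1), tF (n + 1) k
      = 2 * (2 * n + 3) * ∑ k ∈ range (n / 2 + 1), tF n k := by
  set m := (n + 1) / 2 with hm
  have hsum : ∑ k ∈ range (m + 1),
        (4 * (n + 1) * (n + 3) * tF (n + 1) k + 8 * tG n (k + 1))
      = ∑ k ∈ range (m + 1), (8 * (n + 1) * (2 * n + 3) * tF n k + 8 * tG n k) :=
    Finset.sum_congr rfl fun k _ => termwise n k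
  rw [Finset.sum_add_distrib, Finset.sum_add_distrib] at hsum
  have htel : ∑ k ∈ range (m + 1), 8 * tG n (k + 1) = ∑ k ∈ range (m + 1), 8 * tG n k := by
    have h0 : tG n 0 = 0 := by unfold tG; ring
    have hend : tG n (m + 1) = 0 := by
      unfold tG
      rw [Nat.choose_eq_zero_of_lt (show n + 1 < 2 * (m + 1) by omega)]
      ring
    calc ∑ k ∈ range (m + 1), 8 * tG n (k + 1)
        = (∑ k ∈ range (m + 1), 8 * tG n (k + 1)) + 8 * tG n 0 := by simp [h0]
      _ = ∑ k ∈ range (m + 2), 8 * tG n k := (Finset.sum_range_succ' (fun k => 8 * tG n k) (m + 1)).symm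
      _ = (∑ k ∈ range (m + 1), 8 * tG n k) + 8 * tG n (m + 1) :=
          Finset.sum_range_succ _ _
      _ = ∑ k ∈ range (m + 1), 8 * tG n k := by simp [hend]
  rw [htel] at hsum
  have key2 : 4 * (n + 1) * (n + 3) * ∑ k ∈ range (m + 1), tF (n + 1) k
      = 8 * (n + 1) * (2 * n + 3) * ∑ k ∈ range (m + 1), tF n k := by
    rw [Finset.mul_sum, Finset.mul_sum]
    exact Nat.add_right_cancel hsum
  have hF : ∑ k ∈ range (m + 1), tF n k = ∑ k ∈ range (n / 2 + 1), tF n k := by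
    rcases Nat.even_or_odd n with ⟨t, rfl⟩ | ⟨t, rfl⟩
    · have hmt : m = t := by omega
      have hnt : (t + t) / 2 = t := by omega
      rw [hmt, hnt]
    · have hmt : m = t + 1 := by omega
      have hnt : (2 * t + 1) / 2 = t := by omega
      rw [hmt, hnt, Finset.sum_range_succ]
      have : tF (2 * t + 1) (t + 1) = 0 := by
        unfold tF
        rw [Nat.choose_eq_zero_of_lt (show 2 * t + 1 < 2 * (t + 1) by omega)]
        ring
      rw [this, add_zero]
  rw [← hF]
  apply Nat.eq_of_mul_eq_mul_left (show 0 < 4 * (n + 1) by omega)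
  calc 4 * (n + 1) * ((n + 3) * ∑ k ∈ range (m + 1), tF (n + 1) k)
      = 4 * (n + 1) * (n + 3) * ∑ k ∈ range (m + 1), tF (n + 1) k := by ring
    _ = 8 * (n + 1) * (2 * n + 3) * ∑ k ∈ range (m + 1), tF n k := key2
    _ = 4 * (n + 1) * (2 * (2 * n + 3) * ∑ k ∈ range (m + 1), tF n k) := by ring

/-- Touchard's identity: for every `n ≥ 0`,
`C (n+1) = ∑_{0 ≤ k ≤ n/2} 2^(n-2k) * (n choose 2k) * C k`. -/
theorem touchard_identity (n : ℕ) :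
    catalan (n + 1) =
      ∑ k ∈ Finset.Icc 0 (n / 2), 2 ^ (n - 2 * k) * n.choose (2 * k) * catalan k := by
  have key : ∀ n : ℕ, catalan (n + 1) = ∑ k ∈ range (n / 2 + 1), tF n k := by
    intro n
    induction n with
    | zero => simp [tF, catalan_one]
    | succ n ih =>
      have h1 := sum_rec n
      rw [← ih] at h1
      rw [← catalan_rec n] at h1
      exact Nat.eq_of_mul_eq_mul_left (show 0 < n + 3 by omega) h1.symm
  rw [key n]
  rw [show Finset.Icc 0 (n / 2) = range (n / 2 + 1) by
    ext x; simp [Nat.lt_succ_iff]]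
  rfl
end

section
/- (Amdeberhan's identity) For every integer n ≥ 0, (2n/(n+3))·C_{n+1} = ∑_{0 ≤ k ≤ (n-1)/2} 2^{n-2k} · C(n, 2k+1) · C_k · (2k+1)/(k+2), as an identity of rational numbers, where the sum is over integers k with 0 ≤ k ≤ (n-1)/2. -/
/-!
Writing `T n k` for the summand and `S n = ∑ₖ T n k`, Zeilberger's algorithm produces a
certificate `G n k` with
`n (n + 4) T (n + 1) k - 2 (n + 1) (2 n + 3) T n k = G n (k + 1) - G n k`.
Summing over `k` telescopes to `n (n + 4) S (n + 1) = 2 (n + 1) (2 n + 3) S n`, and the left-hand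
side `2 n C (n + 1) / (n + 3)` satisfies the same recurrence because
`(n + 3) C (n + 2) = 2 (2 n + 3) C (n + 1)`. The two sides agree at `n = 0` and `n = 1`.
-/

open Finset

theorem succ_succ_mul_catalan_succ (n : ℕ) :
    (n + 2) * catalan (n + 1) = 2 * (2 * n + 1) * catalan n := by
  refine Nat.eq_of_mul_eq_mul_left n.succ_pos ?_
  calc (n + 1) * ((n + 2) * catalan (n + 1))
      = (n + 1) * (n + 1).centralBinom := by rw [← succ_mul_catalan_eq_centralBinom]
    _ = 2 * (2 * n + 1) * n.centralBinom := Nat.succ_mul_centralBinom_succ n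
    _ = (n + 1) * (2 * (2 * n + 1) * catalan n) := by
      rw [← succ_mul_catalan_eq_centralBinom]; ring

theorem Nat.cast_choose_succ_mul {R : Type*} [Ring R] (n k : ℕ) :
    (n.choose (k + 1) : R) * (k + 1) = n.choose k * (n - k) := by
  rcases le_or_gt k n with hkn | hnk
  · have := congrArg (Nat.cast : ℕ → R) (Nat.choose_succ_right_eq n k)
    push_cast [Nat.cast_sub hkn] at this
    exact this
  · simp [Nat.choose_eq_zero_of_lt hnk, Nat.choose_eq_zero_of_lt (hnk.trans k.lt_succ_self)]

theorem two_pow_sub_mul_choose {R : Type*} [CommSemiring R] (n k : ℕ) :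
    (2 : R) ^ (n - (k + 2)) * n.choose (k + 2) * 4 = 2 ^ (n - k) * n.choose (k + 2) := by
  rcases le_or_gt (k + 2) n with h | h
  · rw [show n - k = n - (k + 2) + 2 by omega, pow_add]; ring
  · simp [Nat.choose_eq_zero_of_lt h]

namespace Amdeberhan

noncomputable def term (n k : ℕ) : ℚ :=
  2 ^ (n - 2 * k) * (n.choose (2 * k + 1) : ℚ) * (catalan k : ℚ) * (2 * k + 1) / (k + 2)

noncomputable def certificate (n k : ℕ) : ℚ :=
  -8 * k * (n + 1) * 2 ^ (n - 2 * k) * (n.choose (2 * k) : ℚ) * (catalan k : ℚ)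

theorem term_eq_zero {n k : ℕ} (h : n ≤ 2 * k) : term n k = 0 := by
  simp [term, Nat.choose_eq_zero_of_lt (Nat.lt_succ_of_le h)]

theorem certificate_eq_zero {n k : ℕ} (h : n < 2 * k) : certificate n k = 0 := by
  simp [certificate, Nat.choose_eq_zero_of_lt h]

theorem recurrence_term_eq_sub (n k : ℕ) :
    n * (n + 4) * term (n + 1) k - 2 * (n + 1) * (2 * n + 3) * term n k
      = certificate n (k + 1) - certificate n k := by
  rcases lt_or_ge n (2 * k) with h | h
  · rw [term_eq_zero (by omega), term_eq_zero h.le, certificate_eq_zero h, certificate_eq_zero (by omega)]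
    ring
  obtain ⟨m, rfl⟩ := Nat.exists_eq_add_of_le h
  have h1 := Nat.cast_choose_succ_mul (R := ℚ) (2 * k + m) (2 * k)
  have h2 := Nat.cast_choose_succ_mul (R := ℚ) (2 * k + m) (2 * k + 1)
  have hpow := two_pow_sub_mul_choose (R := ℚ) (2 * k + m) (2 * k)
  have hcat : ((k : ℚ) + 2) * catalan (k + 1) = 2 * (2 * k + 1) * catalan k := by
    exact_mod_cast succ_succ_mul_catalan_succ k
  rw [Nat.add_sub_cancel_left] at hpow
  simp only [term, certificate, Nat.choose_succ_succ', show 2 * (k + 1) = 2 * k + 2 by ring,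
    show 2 * k + m + 1 - 2 * k = m + 1 by omega, Nat.add_sub_cancel_left]
  push_cast at *
  field_simp
  linear_combination
    (8 * ((k : ℚ) + 1) * (2 * k + m + 1) * 2 ^ (2 * k + m - (2 * k + 2))
        * (2 * k + m).choose (2 * k + 2)) * hcat
    + (4 * ((k : ℚ) + 1) * (2 * k + 1) * (2 * k + m + 1) * catalan k) * hpow
    + (2 * (2 * (k : ℚ) + 1) * (2 * k + m + 1) * catalan k * 2 ^ m) * h2
    - 2 * (2 ^ m * catalan k * ((2 * k + 1) * (2 * k + m + 1) + 3)) * h1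

theorem sum_range_half_eq_sum_range (n : ℕ) :
    ∑ k ∈ range ((n + 1) / 2), term n k = ∑ k ∈ range (n + 1), term n k :=
  sum_subset (range_subset_range.2 (by omega)) fun k _ hk ↦
    term_eq_zero (by simp only [mem_range] at hk; omega)

theorem recurrence_sum_term (n : ℕ) :
    n * (n + 4) * ∑ k ∈ range (n + 2), term (n + 1) k
      = 2 * (n + 1) * (2 * n + 3) * ∑ k ∈ range (n + 1), term n k := by
  rw [sum_range_succ _ (n + 1), term_eq_zero (by omega), add_zero, ← sub_eq_zero, mul_sum,
    mul_sum, ← sum_sub_distrib]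
  simp only [recurrence_term_eq_sub, sum_range_sub, certificate_eq_zero (show n < 2 * (n + 1) by omega)]
  simp [certificate]

theorem add_three_mul_sum_term (n : ℕ) :
    (n + 3) * ∑ k ∈ range (n + 1), term n k = 2 * n * catalan (n + 1) := by
  induction n with
  | zero => simp [term]
  | succ n ih =>
    rcases Nat.eq_zero_or_pos n with rfl | hpos
    -- the recurrence is trivial at `n = 0`, so `n = 1` is a second base case
    · norm_num [sum_range_succ, term, catalan_two, Nat.choose_eq_zero_of_lt]
    have hcat : ((n : ℚ) + 3) * catalan (n + 2) = 2 * (2 * n + 3) * catalan (n + 1) := by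
      exact_mod_cast succ_succ_mul_catalan_succ (n + 1)
    have hn : (n : ℚ) * (n + 3) ≠ 0 := by positivity
    refine mul_left_cancel₀ hn ?_
    push_cast
    linear_combination (n + 3) * recurrence_sum_term n + 2 * (n + 1) * (2 * n + 3) * ih
      - 2 * n * (n + 1) * hcat

end Amdeberhan

/-- Amdeberhan's identity: for every `n ≥ 0`,
`(2n/(n+3)) * C (n+1) = ∑_{0 ≤ k, 2k+1 ≤ n} 2^(n-2k) * (n choose (2k+1)) * C k * (2k+1)/(k+2)`,
as an identity of rational numbers. The sum is over integers `k` with `0 ≤ k` and `2k+1 ≤ n`,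
i.e. `k < (n+1)/2`. -/
theorem amdeberhan_identity (n : ℕ) :
    (2 * n / (n + 3) : ℚ) * (catalan (n + 1) : ℚ) =
      ∑ k ∈ Finset.range ((n + 1) / 2),
        2 ^ (n - 2 * k) * (n.choose (2 * k + 1) : ℚ) * (catalan k : ℚ) *
          (2 * k + 1) / (k + 2) := by
  change _ = ∑ k ∈ range ((n + 1) / 2), Amdeberhan.term n k
  rw [Amdeberhan.sum_range_half_eq_sum_range, div_mul_eq_mul_div,
    ← Amdeberhan.add_three_mul_sum_term]
  field_simp
end

section
/- For all integers n ≥ 1 and k ≥ 0, the number of Dyck paths of semilength n that contain exactly k occurrences of the consecutive factor DDU (a downstep followed by a downstep followed by an upstep) equals 2^{n-1-2k} · C(n-1, 2k) · C_k. -/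
/-!
Cut a Dyck word at its first return, `p = U q D r`. A `DDU` straddles the cut exactly when `q`
and `r` are both nonempty, so under the Dyck word / binary tree correspondence the `DDU`s are the
nodes with two children. Hence the polynomials `P n = ∑ t ^ #DDU` over Dyck words of semilength
`n` satisfy `P (n + 1) = ∑_{i + j = n} t ^ [i ≠ 0 ∧ j ≠ 0] P i P j`, and `Q n = P (n + 1)` obeys
the bicoloured Motzkin recursion `Q (m + 2) = 2 Q (m + 1) + t ∑_{i + j = m} Q i Q j`.
Its solution `2 ^ (n - 2k) C(n, 2k) C_k` is checked coefficientwise, using the identity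
`∑_{i + j = m} C(i, a) C(j, b) = C(m + 1, a + b + 1)` and Segner's recurrence for `C_k`.
-/

open DyckStep

/-- The number of occurrences of the consecutive factor `DDU` in a list of Dyck steps:
the number of indices `i` such that positions `i`, `i+1`, `i+2` are `D`, `D`, `U`. -/
def countDDU (l : List DyckStep) : ℕ :=
  l.tails.countP fun t => decide ([D, D, U] <+: t)

open Finset Finset.Nat Polynomial

theorem Nat.sum_antidiagonal_choose_mul_choose (m a b : ℕ) :
    ∑ ij ∈ antidiagonal m, ij.1.choose a * ij.2.choose b = (m + 1).choose (a + b + 1) := by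
  induction m generalizing b with
  | zero => rcases a with _ | a <;> rcases b with _ | b <;> simp [Nat.choose_eq_zero_of_lt]
  | succ m ih =>
    rw [sum_antidiagonal_succ', choose_succ_succ (m + 1)]
    rcases b with _ | b
    · simpa using ih 0
    · have pascal : ∀ ij ∈ antidiagonal m, ij.1.choose a * (ij.2 + 1).choose (b + 1) =
          ij.1.choose a * ij.2.choose b + ij.1.choose a * ij.2.choose (b + 1) :=
        fun ij _ => by rw [choose_succ_succ, mul_add]
      rw [sum_congr rfl pascal, sum_add_distrib, ih, ih, choose_zero_succ, mul_zero, zero_add]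
      rfl

theorem sum_antidiagonal_sum_antidiagonal_two_pow_mul_choose_mul_catalan (m k : ℕ) :
    ∑ ab ∈ antidiagonal k, ∑ ij ∈ antidiagonal m,
        (2 ^ ij.1 * ij.1.choose (2 * ab.1) * catalan ab.1) *
          (2 ^ ij.2 * ij.2.choose (2 * ab.2) * catalan ab.2) =
      2 ^ m * (m + 1).choose (2 * k + 1) * catalan (k + 1) := by
  have inner : ∀ ab ∈ antidiagonal k, ∑ ij ∈ antidiagonal m,
        (2 ^ ij.1 * ij.1.choose (2 * ab.1) * catalan ab.1) *
          (2 ^ ij.2 * ij.2.choose (2 * ab.2) * catalan ab.2) =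
      2 ^ m * (m + 1).choose (2 * k + 1) * (catalan ab.1 * catalan ab.2) := by
    intro ab hab
    have hpow : ∀ ij ∈ antidiagonal m, (2 ^ ij.1 * ij.1.choose (2 * ab.1) * catalan ab.1) *
        (2 ^ ij.2 * ij.2.choose (2 * ab.2) * catalan ab.2) =
          2 ^ m * (catalan ab.1 * catalan ab.2) *
            (ij.1.choose (2 * ab.1) * ij.2.choose (2 * ab.2)) := by
      intro ij hij
      rw [← mem_antidiagonal.mp hij, pow_add]
      ring
    rw [sum_congr rfl hpow, ← mul_sum, Nat.sum_antidiagonal_choose_mul_choose, ← mul_add,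
      mem_antidiagonal.mp hab]
    ring
  rw [sum_congr rfl inner, ← mul_sum, catalan_succ']

theorem countDDU_cons (x : DyckStep) (l : List DyckStep) :
    countDDU (x :: l) = countDDU l + if [D, D, U] <+: x :: l then 1 else 0 := by
  simp only [countDDU, List.tails_cons, List.countP_cons, decide_eq_true_eq]

theorem DDU_prefix_append_D_cons_iff {t r : List DyckStep} (hr : ∀ h : r ≠ [], r.head h = U) :
    [D, D, U] <+: t ++ D :: r ↔ [D, D, U] <+: t ∨ t = [D] ∧ r ≠ [] := by
  rcases r with _ | ⟨y, r⟩
  · rcases t with _ | ⟨a, _ | ⟨b, _ | ⟨c, t⟩⟩⟩ <;> simp [List.cons_prefix_cons]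
  · obtain rfl : y = U := hr (List.cons_ne_nil _ _)
    rcases t with _ | ⟨a, _ | ⟨b, _ | ⟨c, t⟩⟩⟩ <;> simp [List.cons_prefix_cons, eq_comm (a := D)]

theorem countDDU_append_D_cons (l : List DyckStep) {r : List DyckStep}
    (hr : ∀ h : r ≠ [], r.head h = U) :
    countDDU (l ++ D :: r) =
      countDDU l + countDDU r + if l.getLast? = some D ∧ r ≠ [] then 1 else 0 := by
  induction l with
  | nil =>
    have hDr : ¬ [D, D, U] <+: D :: r := by
      simpa using DDU_prefix_append_D_cons_iff (t := []) hr
    simp [hDr, countDDU]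
  | cons x t ih =>
    rw [List.cons_append, countDDU_cons, ih, countDDU_cons]
    simp only [← List.cons_append, DDU_prefix_append_D_cons_iff hr]
    rcases t with _ | ⟨y, t⟩
    · by_cases hx : x = D <;> simp [hx, countDDU]
    · simp only [ne_eq, List.cons_prefix_cons, List.cons.injEq, reduceCtorEq, and_false,
        false_and, or_false, List.getLast?_cons_cons]
      omega

namespace DyckWord

theorem getLast?_toList_eq_some_D_iff {p : DyckWord} : p.toList.getLast? = some D ↔ p ≠ 0 := by
  rw [← toList_ne_nil]
  refine ⟨fun h h0 => by simp [h0] at h, fun h => ?_⟩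
  rw [List.getLast?_eq_some_getLast h, getLast_eq_D]

theorem countDDU_nest_add (q r : DyckWord) :
    countDDU (q.nest + r).toList =
      countDDU q.toList + countDDU r.toList + if q ≠ 0 ∧ r ≠ 0 then 1 else 0 := by
  have hlist : (q.nest + r).toList = U :: (q.toList ++ D :: r.toList) := by
    change ([U] ++ q.toList ++ [D]) ++ r.toList = _
    simp
  have hU : ¬ [D, D, U] <+: U :: (q.toList ++ D :: r.toList) := by simp [List.cons_prefix_cons]
  rw [hlist, countDDU_cons, if_neg hU, add_zero, countDDU_append_D_cons _ (head_eq_U r)]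
  simp only [getLast?_toList_eq_some_D_iff, toList_ne_nil]

end DyckWord

namespace BinaryTree

theorem numNodes_eq_zero_iff {α : Type*} {t : BinaryTree α} : t.numNodes = 0 ↔ t = nil := by
  cases t <;> simp [numNodes]

def numFullNodes {α : Type*} [DecidableEq α] : BinaryTree α → ℕ
  | nil => 0
  | node _ l r => l.numFullNodes + r.numFullNodes + if l ≠ nil ∧ r ≠ nil then 1 else 0

noncomputable def fullNodesPoly (n : ℕ) : ℕ[X] :=
  ∑ t ∈ treesOfNumNodesEq n, X ^ t.numFullNodes

theorem fullNodesPoly_succ (n : ℕ) :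
    fullNodesPoly (n + 1) = ∑ ij ∈ antidiagonal n,
      X ^ (if ij.1 ≠ 0 ∧ ij.2 ≠ 0 then 1 else 0) * fullNodesPoly ij.1 * fullNodesPoly ij.2 := by
  rw [fullNodesPoly, treesOfNumNodesEq_succ, sum_biUnion]
  · refine sum_congr rfl fun ij _ => ?_
    rw [sum_map, sum_product, fullNodesPoly, fullNodesPoly, mul_assoc, sum_mul_sum]
    simp_rw [mul_sum]
    refine sum_congr rfl fun l hl => sum_congr rfl fun r hr => ?_
    rw [mem_treesOfNumNodesEq] at hl hr
    change X ^ (l △ r).numFullNodes = _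
    rw [numFullNodes, pow_add, pow_add, ← hl, ← hr]
    simp only [ne_eq, numNodes_eq_zero_iff]
    ring
  · simp_rw [Set.PairwiseDisjoint, Set.Pairwise, Function.onFun, disjoint_left]
    aesop

@[simp] theorem fullNodesPoly_zero : fullNodesPoly 0 = 1 := by
  simp [fullNodesPoly, numFullNodes]

@[simp] theorem fullNodesPoly_one : fullNodesPoly 1 = 1 := by
  simp [fullNodesPoly_succ]

@[simp] theorem fullNodesPoly_two : fullNodesPoly 2 = 2 := by
  rw [fullNodesPoly_succ, sum_antidiagonal_succ]
  simp [one_add_one_eq_two]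

theorem fullNodesPoly_add_three (m : ℕ) :
    fullNodesPoly (m + 3) = 2 * fullNodesPoly (m + 2) +
      X * ∑ ij ∈ antidiagonal m, fullNodesPoly (ij.1 + 1) * fullNodesPoly (ij.2 + 1) := by
  rw [fullNodesPoly_succ, sum_antidiagonal_succ, sum_antidiagonal_succ', mul_sum]
  simp [two_mul, mul_assoc, add_assoc]

/-- Scaling the `k`-th coefficient by `4 ^ k` keeps truncated subtraction out of the exponent. -/
theorem four_pow_mul_coeff_fullNodesPoly_succ (n k : ℕ) :
    4 ^ k * (fullNodesPoly (n + 1)).coeff k = 2 ^ n * n.choose (2 * k) * catalan k := by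
  induction n using Nat.strong_induction_on generalizing k with
  | _ n ih =>
  match n, k with
  | 0, k | 1, k => rcases k with _ | k <;> simp [coeff_one, Nat.choose_eq_zero_iff] <;> omega
  | m + 2, 0 =>
    have h := ih (m + 1) (by omega) 0
    simp only [pow_zero, one_mul, mul_zero, Nat.choose_zero_right, mul_one, catalan_zero] at h ⊢
    rw [fullNodesPoly_add_three, coeff_add, coeff_ofNat_mul, coeff_X_mul_zero, h]
    ring
  | m + 2, k + 1 =>
    have hprod : 4 ^ (k + 1) * ∑ ij ∈ antidiagonal m,
        (fullNodesPoly (ij.1 + 1) * fullNodesPoly (ij.2 + 1)).coeff k =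
          2 ^ (m + 2) * (m + 1).choose (2 * k + 1) * catalan (k + 1) := by
      calc _ = 4 * ∑ ij ∈ antidiagonal m, ∑ ab ∈ antidiagonal k,
            (4 ^ ab.1 * (fullNodesPoly (ij.1 + 1)).coeff ab.1) *
              (4 ^ ab.2 * (fullNodesPoly (ij.2 + 1)).coeff ab.2) := by
            simp_rw [coeff_mul, mul_sum]
            refine sum_congr rfl fun ij _ => sum_congr rfl fun ab hab => ?_
            rw [← mem_antidiagonal.mp hab, pow_succ]
            ring
        _ = 4 * ∑ ab ∈ antidiagonal k, ∑ ij ∈ antidiagonal m,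
            (2 ^ ij.1 * ij.1.choose (2 * ab.1) * catalan ab.1) *
              (2 ^ ij.2 * ij.2.choose (2 * ab.2) * catalan ab.2) := by
            rw [sum_comm]
            refine congrArg _ (sum_congr rfl fun ab _ => sum_congr rfl fun ij hij => ?_)
            have := mem_antidiagonal.mp hij
            rw [ih ij.1 (by omega), ih ij.2 (by omega)]
        _ = _ := by
            rw [sum_antidiagonal_sum_antidiagonal_two_pow_mul_choose_mul_catalan]
            ring
    rw [fullNodesPoly_add_three, coeff_add, coeff_ofNat_mul, coeff_X_mul, finsetSum_coeff,
      mul_add, mul_left_comm, ih (m + 1) (by omega), hprod,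
      show 2 * (k + 1) = 2 * k + 1 + 1 by ring, Nat.choose_succ_succ (m + 1)]
    ring

theorem coeff_fullNodesPoly_succ (n k : ℕ) :
    (fullNodesPoly (n + 1)).coeff k = 2 ^ (n - 2 * k) * n.choose (2 * k) * catalan k := by
  apply Nat.eq_of_mul_eq_mul_left (pow_pos (by norm_num : 0 < 4) k)
  rw [four_pow_mul_coeff_fullNodesPoly_succ]
  rcases le_or_gt (2 * k) n with h | h
  · rw [← mul_assoc, ← mul_assoc, show 4 = 2 ^ 2 by rfl, ← pow_mul, ← pow_add,
      Nat.add_sub_cancel' h]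
  · simp [Nat.choose_eq_zero_of_lt h]

end BinaryTree

namespace DyckWord

open BinaryTree

theorem ofTree_eq_zero_iff {t : BinaryTree Unit} : ofTree t = 0 ↔ t = nil := by
  cases t <;> simp [ofTree]

theorem countDDU_ofTree (t : BinaryTree Unit) : countDDU (ofTree t).toList = t.numFullNodes := by
  induction t with
  | nil => rfl
  | node _ l r ihl ihr =>
    rw [ofTree, countDDU_nest_add, ihl, ihr, numFullNodes]
    simp only [ne_eq, ofTree_eq_zero_iff]

theorem countDDU_eq_numFullNodes_toTree (p : DyckWord) :
    countDDU p.toList = p.toTree.numFullNodes := by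
  rw [← countDDU_ofTree, ofTree_toTree]

theorem card_countDDU_eq_coeff_fullNodesPoly (n k : ℕ) :
    Nat.card {p : DyckWord // p.semilength = n ∧ countDDU p.toList = k} =
      (fullNodesPoly n).coeff k := by
  calc _ = Nat.card {t // t ∈ (treesOfNumNodesEq n).filter (·.numFullNodes = k)} :=
        Nat.card_congr <| equivTree.subtypeEquiv fun p => by
          simp [countDDU_eq_numFullNodes_toTree]
    _ = (fullNodesPoly n).coeff k := by
        rw [Nat.card_eq_finsetCard, fullNodesPoly, finsetSum_coeff]
        simp [coeff_X_pow, eq_comm]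

end DyckWord

/-- The number of Dyck paths of semilength `n` with exactly `k` occurrences of `DDU`
equals `2^(n-1-2k) * ((n-1) choose 2k) * C k`. -/
theorem card_dyckWord_with_k_DDU (n k : ℕ) (hn : 1 ≤ n) :
    Nat.card {p : DyckWord // p.semilength = n ∧ countDDU p.toList = k} =
      2 ^ (n - 1 - 2 * k) * (n - 1).choose (2 * k) * catalan k := by
  obtain ⟨m, rfl⟩ := Nat.exists_eq_add_of_le' hn
  rw [DyckWord.card_countDDU_eq_coeff_fullNodesPoly, BinaryTree.coeff_fullNodesPoly_succ,
    Nat.add_sub_cancel]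
end
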